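/- If the differential polynomial ring R = D[t;δ] is a simple ring, then there exists no monic f ∈ R of degree m ≥ 2 such that the Petit algebra S_f is not associative and D ⊆ Nuc_r(S_f). -/

import Mathlib

open Finsupp

section Defs

variable {D R : Type*}

/-- `δ` is a derivation on the (possibly noncommutative) ring `D`. -/
def IsDeriv [Ring D] (δ : D → D) : Prop :=
  (∀ a b, δ (a + b) = δ a + δ b) ∧ ∀ a b, δ (a * b) = a * δ b + δ a * b

/-- `(R, i, t, coeff)` realizes the differential polynomial ring `D[t;δ]`:
`t * a = a * t + δ a` for `a ∈ D`, and every element of `R` is uniquely of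
the form `∑ aₙ tⁿ`, the `aₙ` being recorded by the additive equivalence `coeff`. -/
def IsDiffPolyRing [Ring D] [Ring R] (δ : D → D) (i : D →+* R) (t : R)
    (coeff : R ≃+ (ℕ →₀ D)) : Prop :=
  (∀ a : D, t * i a = i a * t + i (δ a)) ∧
    ∀ (n : ℕ) (a : D), coeff.symm (Finsupp.single n a) = i a * t ^ n

/-- `r` has degree `< m`. -/
def DegLt [Ring D] [Ring R] (coeff : R ≃+ (ℕ →₀ D)) (m : ℕ) (r : R) : Prop :=
  ∀ n, m ≤ n → coeff r n = 0

/-- `f` is monic of degree `m`. -/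
def MonicDeg [Ring D] [Ring R] (coeff : R ≃+ (ℕ →₀ D)) (m : ℕ) (f : R) : Prop :=
  coeff f m = 1 ∧ ∀ n, m < n → coeff f n = 0

/-- The carrier of the Petit algebra `S_f`: all polynomials of degree `< m`. -/
def SfSet [Ring D] [Ring R] (coeff : R ≃+ (ℕ →₀ D)) (m : ℕ) : Set R :=
  {r | DegLt coeff m r}

/-- `mul` is the Petit multiplication: `mul x y = x·y mod_r f`, i.e. `mul x y`
has degree `< m` and differs from `x·y` by a left multiple of `f`. -/
def IsPetitMul [Ring D] [Ring R] (coeff : R ≃+ (ℕ →₀ D)) (f : R) (m : ℕ)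
    (mul : R → R → R) : Prop :=
  ∀ x y : R, DegLt coeff m (mul x y) ∧ ∃ q : R, x * y = q * f + mul x y

/-- `f` is right semi-invariant: `f·a ∈ D·f` for all `a ∈ D`. -/
def RightSemiInvariant [Ring D] [Ring R] (i : D →+* R) (f : R) : Prop :=
  ∀ a : D, ∃ b : D, f * i a = i b * f

/-- `f` is two-sided (invariant): the left ideal `Rf` is a two-sided ideal. -/
def TwoSidedElem [Ring R] (f : R) : Prop :=
  ∀ r : R, ∃ q : R, f * r = q * f

/-- `f` (of degree `m`) is irreducible: it has no factorization into factors
of degree `< m`. -/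
def IrredDeg [Ring D] [Ring R] (coeff : R ≃+ (ℕ →₀ D)) (m : ℕ) (f : R) : Prop :=
  ¬∃ g h : R, f = g * h ∧ DegLt coeff m g ∧ DegLt coeff m h

/-- `f` (of degree `m`) is irreducible as a polynomial with coefficients in
the subfield `Fset` of `D`. -/
def IrredOver [Ring D] [Ring R] (coeff : R ≃+ (ℕ →₀ D)) (Fset : Set D) (m : ℕ)
    (f : R) : Prop :=
  ¬∃ g h : R, f = g * h ∧ DegLt coeff m g ∧ DegLt coeff m h ∧
    (∀ n, coeff g n ∈ Fset) ∧ ∀ n, coeff h n ∈ Fset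

/-- Left nucleus of the algebra `(S, mul)`. -/
def LeftNuc [Ring R] (S : Set R) (mul : R → R → R) : Set R :=
  {x ∈ S | ∀ y ∈ S, ∀ z ∈ S, mul (mul x y) z = mul x (mul y z)}

/-- Middle nucleus of the algebra `(S, mul)`. -/
def MidNuc [Ring R] (S : Set R) (mul : R → R → R) : Set R :=
  {x ∈ S | ∀ y ∈ S, ∀ z ∈ S, mul (mul y x) z = mul y (mul x z)}

/-- Right nucleus of the algebra `(S, mul)`. -/
def RightNuc [Ring R] (S : Set R) (mul : R → R → R) : Set R :=
  {x ∈ S | ∀ y ∈ S, ∀ z ∈ S, mul (mul y z) x = mul y (mul z x)}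

/-- `(S, mul)` is a division algebra: all nonzero left and right
multiplications are bijective. -/
def IsDivAlg [Ring R] (S : Set R) (mul : R → R → R) : Prop :=
  ∀ x ∈ S, x ≠ 0 → Set.BijOn (mul x) S S ∧ Set.BijOn (fun y => mul y x) S S

/-- `(S, mul)` is associative. -/
def IsAssocOn [Ring R] (S : Set R) (mul : R → R → R) : Prop :=
  ∀ x ∈ S, ∀ y ∈ S, ∀ z ∈ S, mul (mul x y) z = mul x (mul y z)

/-- The constants of `δ`. -/
def ConstSet [Ring D] (δ : D → D) : Set D := {a | δ a = 0}

/-- The center of `D`. -/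
def CenterSet (D : Type*) [Ring D] : Set D := {a | ∀ b, a * b = b * a}

/-- `F₀ = Const(δ) ∩ C(D)`. -/
def F0Set [Ring D] (δ : D → D) : Set D := ConstSet δ ∩ CenterSet D

/-- The elements of the Petit algebra all of whose coefficients lie in `Fset`,
e.g. `Fset ⊕ Fset·t ⊕ ⋯ ⊕ Fset·t^{m-1}`. -/
def SubCoeffSet [Ring D] [Ring R] (coeff : R ≃+ (ℕ →₀ D)) (m : ℕ)
    (Fset : Set D) : Set R :=
  {r | DegLt coeff m r ∧ ∀ n, coeff r n ∈ Fset}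

/-- `S ⊆ R` has dimension `k` over the subfield `Fset ⊆ D` (acting through `i`):
there is an `Fset`-basis of size `k`. -/
def HasDim [Ring D] [Ring R] (Fset : Set D) (i : D →+* R) (S : Set R) (k : ℕ) : Prop :=
  ∃ b : Fin k → R, (∀ j, b j ∈ S) ∧
    ∀ x ∈ S, ∃! c : Fin k → D, (∀ j, c j ∈ Fset) ∧ x = ∑ j, i (c j) * b j

/-- `S ⊆ D` has dimension `k` over the subfield `Fset ⊆ D`. -/
def HasDimIn [Ring D] (Fset : Set D) (S : Set D) (k : ℕ) : Prop :=
  ∃ b : Fin k → D, (∀ j, b j ∈ S) ∧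
    ∀ x ∈ S, ∃! c : Fin k → D, (∀ j, c j ∈ Fset) ∧ x = ∑ j, c j * b j

/-- Substitution of `x` for `t` in `r = ∑ aₙ tⁿ`. -/
noncomputable def substT [Ring D] [Ring R] (coeff : R ≃+ (ℕ →₀ D)) (i : D →+* R) (r x : R) : R :=
  (coeff r).sum fun n c => i c * x ^ n

/-- `V_f(b)`: the constant `f(t) − f(t−b)`. -/
noncomputable def Vf [Ring D] [Ring R] (coeff : R ≃+ (ℕ →₀ D)) (i : D →+* R) (t f : R) (b : D) : D :=
  coeff (f - substT coeff i f (t - i b)) 0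

/-- `V_p(b)`: the constant with `(t−b)^p = t^p − V_p(b)`. -/
noncomputable def Vp [Ring D] [Ring R] (coeff : R ≃+ (ℕ →₀ D)) (i : D →+* R) (t : R) (p : ℕ)
    (b : D) : D :=
  coeff (t ^ p - (t - i b) ^ p) 0

/-- For commutative coefficients, `V_p(b) = b^p + δ^{p−1}(b)`. -/
def VpFun [Ring D] (δ : D → D) (p : ℕ) : D → D := fun b => b ^ p + δ^[p - 1] b

/-- `V(a) = V_{p^e}(a) + c₁ V_{p^{e−1}}(a) + ⋯ + c_e a`, computed with
`V_p(b) = b^p + δ^{p−1}(b)` (commutative case). -/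
def Vg [Ring D] (δ : D → D) (p e : ℕ) (c : Fin e → D) : D → D :=
  fun a => (VpFun δ p)^[e] a + ∑ j : Fin e, c j * (VpFun δ p)^[e - 1 - (j : ℕ)] a

/-- `V(a) = V_{p^e}(a) + c₁ V_{p^{e−1}}(a) + ⋯ + c_e a`, with `V_p` defined by
the identity `(t−b)^p = t^p − V_p(b)` in `D[t;δ]`. -/
noncomputable def VgR [Ring D] [Ring R] (coeff : R ≃+ (ℕ →₀ D)) (i : D →+* R) (t : R) (p e : ℕ)
    (c : Fin e → D) : D → D :=
  fun a => (Vp coeff i t p)^[e] a + ∑ j : Fin e, c j * (Vp coeff i t p)^[e - 1 - (j : ℕ)] a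

/-- The map `G_{id,−a}` sending `∑ bₙ tⁿ` to `∑ bₙ (t−a)ⁿ`. -/
noncomputable def Gmap [Ring D] [Ring R] (coeff : R ≃+ (ℕ →₀ D)) (i : D →+* R) (t : R) (a : D) :
    R → R :=
  fun r => substT coeff i r (t - i a)

/-- `H` is an isomorphism of `Fset`-algebras from `(S, mul)` onto `(S', mul')`. -/
def IsAlgIso [Ring D] [Ring R] (Fset : Set D) (i : D →+* R) (S S' : Set R)
    (mul mul' : R → R → R) (H : R → R) : Prop :=
  Set.BijOn H S S' ∧ (∀ x ∈ S, ∀ y ∈ S, H (x + y) = H x + H y) ∧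
    (∀ x ∈ S, ∀ y ∈ S, H (mul x y) = mul' (H x) (H y)) ∧ H 1 = 1 ∧
    ∀ a ∈ Fset, ∀ x ∈ S, H (i a * x) = i a * H x

/-- `H` is an `Fset`-algebra automorphism of the Petit algebra `(S, mul)`. -/
def IsAut [Ring D] [Ring R] (Fset : Set D) (i : D →+* R) (S : Set R)
    (mul : R → R → R) (H : R → R) : Prop :=
  IsAlgIso Fset i S S mul mul H

/-- The operator `δ^{p^e} + c₁ δ^{p^{e−1}} + ⋯ + c_e δ` vanishes on `Cset`,
i.e. the `p`-polynomial `t^{p^e} + c₁ t^{p^{e−1}} + ⋯ + c_e t` annihilates `δ|_{Cset}`. -/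
def PPolyAnnOn [Ring D] (δ : D → D) (Cset : Set D) (p e : ℕ) (c : Fin e → D) : Prop :=
  ∀ a ∈ Cset, δ^[p ^ e] a + ∑ j : Fin e, c j * δ^[p ^ (e - 1 - (j : ℕ))] a = 0

/-- `t^{p^e} + c₁ t^{p^{e−1}} + ⋯ + c_e t` (coefficients in `Fset`) is the minimum
`p`-polynomial of `δ` restricted to `Cset`. -/
def IsMinPPoly [Ring D] (δ : D → D) (Cset Fset : Set D) (p e : ℕ)
    (c : Fin e → D) : Prop :=
  (∀ j, c j ∈ Fset) ∧ PPolyAnnOn δ Cset p e c ∧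
    ∀ e' : ℕ, e' < e → ∀ c' : Fin e' → D, (∀ j, c' j ∈ Fset) →
      ¬PPolyAnnOn δ Cset p e' c'

/-- The natural map from `D[X]` to `R`, `∑ aₙ Xⁿ ↦ ∑ aₙ tⁿ`. -/
noncomputable def polyToR [Ring D] [Ring R] (i : D →+* R) (t : R) (q : Polynomial D) : R :=
  q.sum fun n a => i a * t ^ n

/-- The element `f ∈ R` rewritten as an ordinary polynomial in `D[X]`. -/
noncomputable def coeffPoly [Ring D] [Ring R] (coeff : R ≃+ (ℕ →₀ D)) (f : R) : Polynomial D :=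
  (coeff f).sum fun n a => Polynomial.C a * Polynomial.X ^ n

/-- The set `T = Fset ⊕ Fset·t ⊕ ⋯ ⊕ Fset·t^{m−1} ⊆ S_f` is isomorphic, as a
ring, to the quotient `Fset[X]/(f)`: the natural map `θ : ∑ aₙ Xⁿ ↦ ∑ aₙ tⁿ`,
from polynomials over `Fset` of degree `< m` with multiplication given by
reduction mod `f`, is a bijection onto `T` respecting all the operations. -/
def IsPolyQuotIso [Ring D] [Ring R] (Fset : Set D) (i : D →+* R)
    (coeff : R ≃+ (ℕ →₀ D)) (t f : R) (m : ℕ) (mul : R → R → R) (T : Set R) : Prop :=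
  Set.BijOn (polyToR i t)
    {q : Polynomial D | (∀ n, q.coeff n ∈ Fset) ∧ q.degree < (m : WithBot ℕ)} T ∧
  (∀ q q' : Polynomial D, polyToR i t (q + q') = polyToR i t q + polyToR i t q') ∧
  polyToR i t 1 = 1 ∧
  ∀ q ∈ {q : Polynomial D | (∀ n, q.coeff n ∈ Fset) ∧ q.degree < (m : WithBot ℕ)},
    ∀ q' ∈ {q : Polynomial D | (∀ n, q.coeff n ∈ Fset) ∧ q.degree < (m : WithBot ℕ)},
      ∃ s r : Polynomial D, q * q' = s * coeffPoly coeff f + r ∧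
        r.degree < (m : WithBot ℕ) ∧
        polyToR i t r = mul (polyToR i t q) (polyToR i t q')

end Defs

/-!
If `D` lies in the right nucleus of `S_f`, the associator `[t^(m-1), t, a] = 0` says that
`f a ∈ R f`, and comparing degrees gives `f a = b f` with `b ∈ D`: `f` is right semi-invariant.

A monic right semi-invariant of positive degree contradicts simplicity. Take one, `g`, of minimal
degree `d`. Comparing leading coefficients, `g` commutes with `D`, hence so does `[t, g]`, which has
smaller degree and therefore is a constant `c` by minimality. If `d = 0` in `D`, then
`[t, g^d] = d g^(d-1) c = 0`, so `g^d` is central. Otherwise the coefficient of `t^(d-1)` in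
`g a = a g` shows that `δ = [·, u]` is inner, and `t + u` is central. But the center of a simple
ring is a field, while a nonconstant element of `R` is not a unit.
-/

section DegLt

variable {D R : Type*} [Ring D] [Ring R] {coeff : R ≃+ (ℕ →₀ D)}

theorem DegLt.mono {m m' : ℕ} {r : R} (h : DegLt coeff m r) (hm : m ≤ m') : DegLt coeff m' r :=
  fun n hn => h n (hm.trans hn)

theorem DegLt.sub {m : ℕ} {x y : R} (hx : DegLt coeff m x) (hy : DegLt coeff m y) :
    DegLt coeff m (x - y) :=
  fun n hn => by rw [map_sub, Finsupp.sub_apply, hx n hn, hy n hn, sub_zero]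

theorem eq_zero_of_degLt_zero {r : R} (h : DegLt coeff 0 r) : r = 0 :=
  coeff.injective <| by ext n; simp [h n n.zero_le]

theorem exists_ge_coeff_ne_zero_degLt_succ {r : R} {n : ℕ} (hn : coeff r n ≠ 0) :
    ∃ k, n ≤ k ∧ coeff r k ≠ 0 ∧ DegLt coeff (k + 1) r := by
  set p : Polynomial D := .ofFinsupp (.ofCoeff (coeff r))
  have hp (k : ℕ) : p.coeff k = coeff r k := by rw [Polynomial.coeff_ofFinsupp]
  have hp0 : p ≠ 0 := fun h0 => hn (by rw [← hp, h0, Polynomial.coeff_zero])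
  refine ⟨p.natDegree, Polynomial.le_natDegree_of_ne_zero (by rwa [hp]), ?_, fun k hk => ?_⟩
  · rw [← hp]
    exact Polynomial.leadingCoeff_ne_zero.mpr hp0
  · rw [← hp]
    exact Polynomial.coeff_eq_zero_of_natDegree_lt hk

theorem exists_coeff_ne_zero_degLt_succ {r : R} (hr : r ≠ 0) :
    ∃ k, coeff r k ≠ 0 ∧ DegLt coeff (k + 1) r := by
  obtain ⟨n, hn⟩ : ∃ n, coeff r n ≠ 0 := by
    by_contra! h
    exact hr (coeff.injective (by ext n; simp [h n]))
  obtain ⟨k, -, hk⟩ := exists_ge_coeff_ne_zero_degLt_succ hn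
  exact ⟨k, hk⟩

end DegLt

theorem commutator_pow_succ {R : Type*} [Ring R] {x g c : R} (hgc : Commute g c)
    (h : x * g - g * x = c) (k : ℕ) :
    x * g ^ (k + 1) - g ^ (k + 1) * x = (k + 1) • (g ^ k * c) := by
  induction k with
  | zero => simp [h]
  | succ k ih =>
    calc x * g ^ (k + 2) - g ^ (k + 2) * x
        = (x * g ^ (k + 1) - g ^ (k + 1) * x) * g + g ^ (k + 1) * (x * g - g * x) := by
          rw [pow_succ g (k + 1)]; noncomm_ring
      _ = (k + 1) • (g ^ (k + 1) * c) + g ^ (k + 1) * c := by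
          rw [ih, h, smul_mul_assoc, mul_assoc, ← hgc.eq, ← mul_assoc, ← pow_succ]
      _ = (k + 2) • (g ^ (k + 1) * c) := (succ_nsmul _ (k + 1)).symm

theorem commute_pow_of_natCast_eq_zero {R : Type*} [Ring R] {x g c : R} (hgc : Commute g c)
    (h : x * g - g * x = c) {d : ℕ} (hd : (d : R) = 0) : Commute (g ^ d) x := by
  rcases d with _ | d
  · rw [pow_zero]
    exact Commute.one_left x
  have hpow := commutator_pow_succ hgc h d
  rw [nsmul_eq_mul, hd, zero_mul, sub_eq_zero] at hpow
  exact hpow.symm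

theorem rightSemiInvariant_i_inv_mul {D R : Type*} [DivisionRing D] [Ring R] {i : D →+* R}
    {x : R} (hx : ∀ a, Commute x (i a)) {e : D} (he : e ≠ 0) :
    RightSemiInvariant i (i e⁻¹ * x) :=
  fun a => ⟨e⁻¹ * a * e, by
    rw [mul_assoc, (hx a).eq, ← mul_assoc, ← mul_assoc, ← map_mul, ← map_mul,
      mul_assoc _ e, mul_inv_cancel₀ he, mul_one]⟩

namespace IsDiffPolyRing

section Ring

variable {D R : Type*} [Ring D] [Ring R] {δ : D → D} {i : D →+* R} {t : R}
  {coeff : R ≃+ (ℕ →₀ D)}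

theorem coeff_monomial (hR : IsDiffPolyRing δ i t coeff) (a : D) (n : ℕ) :
    coeff (i a * t ^ n) = single n a := by
  rw [← hR.2 n a, AddEquiv.apply_symm_apply]

theorem coeff_i (hR : IsDiffPolyRing δ i t coeff) (a : D) : coeff (i a) = single 0 a := by
  simpa using hR.coeff_monomial a 0

theorem coeff_tpow (hR : IsDiffPolyRing δ i t coeff) (n : ℕ) : coeff (t ^ n) = single n 1 := by
  simpa using hR.coeff_monomial 1 n

theorem coeff_one (hR : IsDiffPolyRing δ i t coeff) : coeff (1 : R) = single 0 1 := by
  simpa using hR.coeff_tpow 0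

theorem injective_i (hR : IsDiffPolyRing δ i t coeff) : Function.Injective i := fun a b h =>
  single_injective 0 <| by rw [← hR.coeff_i, ← hR.coeff_i, h]

theorem sum_monomial (hR : IsDiffPolyRing δ i t coeff) (r : R) :
    (coeff r).sum (fun n a => i a * t ^ n) = r := by
  apply coeff.injective
  rw [Finsupp.sum, map_sum]
  simp only [hR.coeff_monomial]
  exact (coeff r).sum_single

theorem induction_on (hR : IsDiffPolyRing δ i t coeff) {P : R → Prop} (zero : P 0)
    (add : ∀ x y, P x → P y → P (x + y)) (monomial : ∀ (a : D) (n : ℕ), P (i a * t ^ n))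
    (r : R) : P r := by
  rw [← hR.sum_monomial r]
  exact Finset.sum_induction _ P add zero fun n _ => monomial _ n

theorem i_deriv (hR : IsDiffPolyRing δ i t coeff) (a : D) : i (δ a) = t * i a - i a * t := by
  rw [hR.1 a, add_sub_cancel_left]

theorem deriv_add (hR : IsDiffPolyRing δ i t coeff) (a b : D) : δ (a + b) = δ a + δ b :=
  hR.injective_i <| by simp only [map_add, hR.i_deriv]; noncomm_ring

theorem deriv_zero (hR : IsDiffPolyRing δ i t coeff) : δ 0 = 0 :=
  hR.injective_i <| by simp [hR.i_deriv]

theorem deriv_one (hR : IsDiffPolyRing δ i t coeff) : δ 1 = 0 :=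
  hR.injective_i <| by simp [hR.i_deriv]

theorem coeff_i_mul (hR : IsDiffPolyRing δ i t coeff) (b : D) (r : R) (n : ℕ) :
    coeff (i b * r) n = b * coeff r n := by
  induction r using hR.induction_on with
  | zero => simp
  | add x y hx hy => simp only [mul_add, map_add, Finsupp.add_apply, hx, hy]
  | monomial a k =>
    rw [← mul_assoc, ← map_mul, hR.coeff_monomial, hR.coeff_monomial]
    rcases eq_or_ne k n with rfl | hkn <;> simp [*]

theorem coeff_mul_t (hR : IsDiffPolyRing δ i t coeff) (r : R) (n : ℕ) :
    coeff (r * t) n = if n = 0 then 0 else coeff r (n - 1) := by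
  induction r using hR.induction_on with
  | zero => simp
  | add x y hx hy => rw [add_mul, map_add, Finsupp.add_apply, hx, hy]; split_ifs <;> simp
  | monomial a k =>
    rw [mul_assoc, ← pow_succ, hR.coeff_monomial, hR.coeff_monomial]
    simp only [Finsupp.single_apply]
    split_ifs <;> first | rfl | omega

theorem coeff_commutator (hR : IsDiffPolyRing δ i t coeff) (r : R) (n : ℕ) :
    coeff (t * r - r * t) n = δ (coeff r n) := by
  induction r using hR.induction_on with
  | zero => simp [hR.deriv_zero]
  | add x y hx hy =>
    rw [mul_add, add_mul, add_sub_add_comm, map_add, Finsupp.add_apply, hx, hy, map_add,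
      Finsupp.add_apply, hR.deriv_add]
  | monomial a k =>
    have h : t * (i a * t ^ k) - i a * t ^ k * t = i (δ a) * t ^ k := by
      simp only [hR.i_deriv, sub_mul, mul_assoc, pow_mul_comm']
    rw [h, hR.coeff_monomial, hR.coeff_monomial]
    rcases eq_or_ne k n with rfl | hkn <;> simp [*, hR.deriv_zero]

theorem coeff_t_mul (hR : IsDiffPolyRing δ i t coeff) (r : R) (n : ℕ) :
    coeff (t * r) n = (if n = 0 then 0 else coeff r (n - 1)) + δ (coeff r n) := by
  rw [← hR.coeff_mul_t, ← hR.coeff_commutator, ← Finsupp.add_apply, ← map_add,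
    add_sub_cancel]

theorem eq_i_of_degLt_one (hR : IsDiffPolyRing δ i t coeff) {r : R} (h : DegLt coeff 1 r) :
    r = i (coeff r 0) :=
  coeff.injective <| by
    ext (_ | n)
    · simp [hR.coeff_i]
    · simp [hR.coeff_i, h (n + 1) n.succ_pos]

theorem degLt_i (hR : IsDiffPolyRing δ i t coeff) (a : D) : DegLt coeff 1 (i a) :=
  fun n hn => by rw [hR.coeff_i, single_eq_of_ne (by omega)]

theorem degLt_tpow (hR : IsDiffPolyRing δ i t coeff) {m n : ℕ} (h : n < m) :
    DegLt coeff m (t ^ n) :=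
  fun k hk => by rw [hR.coeff_tpow, single_eq_of_ne (by omega)]

theorem degLt_t_mul (hR : IsDiffPolyRing δ i t coeff) {m : ℕ} {r : R} (h : DegLt coeff m r) :
    DegLt coeff (m + 1) (t * r) := fun n hn => by
  rw [hR.coeff_t_mul, if_neg (by omega), h _ (by omega), h n (by omega), hR.deriv_zero, add_zero]

theorem coeff_t_mul_succ (hR : IsDiffPolyRing δ i t coeff) {l : ℕ} {r : R}
    (h : DegLt coeff (l + 1) r) : coeff (t * r) (l + 1) = coeff r l := by
  rw [hR.coeff_t_mul, if_neg (by omega), h _ le_rfl, hR.deriv_zero, add_zero, Nat.add_sub_cancel]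

theorem degLt_tpow_mul (hR : IsDiffPolyRing δ i t coeff) {l : ℕ} {r : R}
    (h : DegLt coeff (l + 1) r) (j : ℕ) : DegLt coeff (j + l + 1) (t ^ j * r) := by
  induction j with
  | zero => simpa using h
  | succ j ih =>
    rw [pow_succ', mul_assoc, Nat.add_right_comm j 1]
    exact hR.degLt_t_mul ih

theorem coeff_tpow_mul (hR : IsDiffPolyRing δ i t coeff) {l : ℕ} {r : R}
    (h : DegLt coeff (l + 1) r) (j : ℕ) : coeff (t ^ j * r) (j + l) = coeff r l := by
  induction j with
  | zero => simp
  | succ j ih =>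
    rw [pow_succ', mul_assoc, Nat.add_right_comm, hR.coeff_t_mul_succ (hR.degLt_tpow_mul h j), ih]

theorem coeff_mul_eq_sum (hR : IsDiffPolyRing δ i t coeff) (x y : R) (n : ℕ) :
    coeff (x * y) n = ∑ j ∈ (coeff x).support, coeff x j * coeff (t ^ j * y) n := by
  conv_lhs => rw [← hR.sum_monomial x]
  rw [Finsupp.sum, Finset.sum_mul, map_sum, Finset.sum_apply']
  simp only [mul_assoc, hR.coeff_i_mul]

theorem degLt_mul (hR : IsDiffPolyRing δ i t coeff) {k l : ℕ} {x y : R}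
    (hx : DegLt coeff (k + 1) x) (hy : DegLt coeff (l + 1) y) :
    DegLt coeff (k + l + 1) (x * y) := fun n hn => by
  rw [hR.coeff_mul_eq_sum]
  refine Finset.sum_eq_zero fun j _ => ?_
  rcases le_or_gt j k with hj | hj
  · rw [hR.degLt_tpow_mul hy j n (by omega), mul_zero]
  · rw [hx j hj, zero_mul]

theorem coeff_mul_add_of_degLt (hR : IsDiffPolyRing δ i t coeff) {k l : ℕ} {x y : R}
    (hx : DegLt coeff (k + 1) x) (hy : DegLt coeff (l + 1) y) :
    coeff (x * y) (k + l) = coeff x k * coeff y l := by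
  rw [hR.coeff_mul_eq_sum, Finset.sum_eq_single k, hR.coeff_tpow_mul hy]
  · intro j _ hjk
    rcases lt_or_gt_of_ne hjk with hj | hj
    · rw [hR.degLt_tpow_mul hy j _ (by omega), mul_zero]
    · rw [hx j hj, zero_mul]
  · intro hk
    rw [Finsupp.notMem_support_iff.mp hk, zero_mul]

theorem degLt_of_degLt_mul_monicDeg (hR : IsDiffPolyRing δ i t coeff) {m k : ℕ} {f q : R}
    (hf : MonicDeg coeff m f) (h : DegLt coeff (m + k) (q * f)) : DegLt coeff k q := by
  intro n hn
  by_contra hq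
  obtain ⟨N, hnN, hN, hqN⟩ := exists_ge_coeff_ne_zero_degLt_succ hq
  apply hN
  rw [← mul_one (coeff q N), ← hf.1, ← hR.coeff_mul_add_of_degLt hqN hf.2]
  exact h _ (by omega)

theorem degLt_tpow_sub (hR : IsDiffPolyRing δ i t coeff) {m : ℕ} {f : R}
    (hf : MonicDeg coeff m f) : DegLt coeff m (t ^ m - f) := fun n hn => by
  rw [map_sub, Finsupp.sub_apply, hR.coeff_tpow]
  rcases hn.eq_or_lt with rfl | hlt
  · rw [single_eq_same, hf.1, sub_self]
  · rw [single_eq_of_ne (by omega), hf.2 n hlt, sub_zero]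

theorem monicDeg_pow (hR : IsDiffPolyRing δ i t coeff) {d : ℕ} {g : R}
    (hg : MonicDeg coeff d g) (k : ℕ) : MonicDeg coeff (k * d) (g ^ k) := by
  induction k with
  | zero =>
    have h1 : DegLt coeff 1 (1 : R) := by simpa using hR.degLt_i 1
    rw [pow_zero, zero_mul]
    exact ⟨by simp [hR.coeff_one], h1⟩
  | succ k ih =>
    rw [pow_succ, Nat.succ_mul]
    refine ⟨?_, hR.degLt_mul ih.2 hg.2⟩
    rw [hR.coeff_mul_add_of_degLt ih.2 hg.2, ih.1, hg.1, one_mul]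

theorem petitMul_eq_of_eq_mul_add (hR : IsDiffPolyRing δ i t coeff) {m : ℕ} {f : R}
    {mul : R → R → R} (hf : MonicDeg coeff m f) (hmul : IsPetitMul coeff f m mul)
    {x y q r : R} (h : x * y = q * f + r) (hr : DegLt coeff m r) : mul x y = r := by
  obtain ⟨hxy, q', hq'⟩ := hmul x y
  have hdiff : (q - q') * f = mul x y - r := by
    rw [sub_mul, sub_eq_sub_iff_add_eq_add, ← h, hq', add_comm]
  have hq : q - q' = 0 := by
    refine eq_zero_of_degLt_zero (hR.degLt_of_degLt_mul_monicDeg hf ?_)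
    rw [add_zero, hdiff]
    exact hxy.sub hr
  rwa [hq, zero_mul, eq_comm, sub_eq_zero] at hdiff

theorem petitMul_eq_mul (hR : IsDiffPolyRing δ i t coeff) {m : ℕ} {f : R} {mul : R → R → R}
    (hf : MonicDeg coeff m f) (hmul : IsPetitMul coeff f m mul) {x y : R}
    (h : DegLt coeff m (x * y)) : mul x y = x * y :=
  hR.petitMul_eq_of_eq_mul_add hf hmul (q := 0) (by rw [zero_mul, zero_add]) h

theorem rightSemiInvariant_of_forall_mem_rightNuc (hR : IsDiffPolyRing δ i t coeff) {m : ℕ}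
    {f : R} {mul : R → R → R} (hm : 2 ≤ m) (hf : MonicDeg coeff m f)
    (hmul : IsPetitMul coeff f m mul) (hnuc : ∀ a : D, i a ∈ RightNuc (SfSet coeff m) mul) :
    RightSemiInvariant i f := by
  intro a
  have hm1 : m - 1 + 1 = m := by omega
  have htpow : t ^ (m - 1) * t = t ^ m := by rw [← pow_succ, hm1]
  have hta : mul t (i a) = t * i a :=
    hR.petitMul_eq_mul hf hmul ((hR.degLt_t_mul (hR.degLt_i a)).mono hm)
  have htt : mul (t ^ (m - 1)) t = t ^ m - f :=
    hR.petitMul_eq_of_eq_mul_add hf hmul (q := 1) (by rw [htpow, one_mul, add_sub_cancel])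
      (hR.degLt_tpow_sub hf)
  have hfa : mul (t ^ m - f) (i a) = (t ^ m - f) * i a := by
    refine hR.petitMul_eq_mul hf hmul ?_
    have h := hR.degLt_mul (k := m - 1) (by rw [hm1]; exact hR.degLt_tpow_sub hf) (hR.degLt_i a)
    rwa [add_zero, hm1] at h
  have hassoc := (hnuc a).2 (t ^ (m - 1)) (hR.degLt_tpow (by omega)) t
    (show DegLt coeff m t by simpa using hR.degLt_tpow (n := 1) (m := m) (by omega))
  rw [htt, hfa, hta] at hassoc
  obtain ⟨-, q, hq⟩ := hmul (t ^ (m - 1)) (t * i a)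
  rw [← mul_assoc, htpow, ← hassoc] at hq
  have hfq : f * i a = q * f := by
    rw [← sub_eq_iff_eq_add.mpr hq, sub_mul, sub_sub_cancel]
  have hq1 : DegLt coeff 1 q := hR.degLt_of_degLt_mul_monicDeg hf (by
    rw [← hfq]; simpa using hR.degLt_mul (l := 0) hf.2 (hR.degLt_i a))
  exact ⟨coeff q 0, by rw [hfq, ← hR.eq_i_of_degLt_one hq1]⟩

theorem mem_center_of_commute (hR : IsDiffPolyRing δ i t coeff) {q : R}
    (hi : ∀ a, Commute q (i a)) (ht : Commute q t) : q ∈ Subring.center R := by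
  rw [Subring.mem_center_iff]
  intro r
  induction r using hR.induction_on with
  | zero => simp
  | add x y hx hy => rw [add_mul, mul_add, hx, hy]
  | monomial a k => exact ((hi a).mul_right (ht.pow_right k)).eq.symm

theorem degLt_one_of_mul_eq_one [NoZeroDivisors D] (hR : IsDiffPolyRing δ i t coeff) {q b : R}
    (h : q * b = 1) : DegLt coeff 1 q := by
  intro n hn
  by_contra hq
  have hb : b ≠ 0 := by
    rintro rfl
    have hq0 : q = 0 := by rw [← mul_one q, ← h, mul_zero, mul_zero]
    exact hq (by simp [hq0])
  obtain ⟨k, hnk, hk, hqk⟩ := exists_ge_coeff_ne_zero_degLt_succ hq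
  obtain ⟨l, hl, hbl⟩ := exists_coeff_ne_zero_degLt_succ (coeff := coeff) hb
  apply mul_ne_zero hk hl
  rw [← hR.coeff_mul_add_of_degLt hqk hbl, h, hR.coeff_one, single_eq_of_ne (by omega)]

theorem not_isSimpleRing_of_mem_center [NoZeroDivisors D] (hR : IsDiffPolyRing δ i t coeff)
    {q : R} (hq : q ∈ Subring.center R) {n : ℕ} (hn : 0 < n) (hqn : coeff q n ≠ 0) :
    ¬IsSimpleRing R := by
  intro _
  have hq0 : (⟨q, hq⟩ : Subring.center R) ≠ 0 := fun h => hqn <| by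
    rw [show q = 0 from congrArg Subtype.val h, map_zero, Finsupp.coe_zero, Pi.zero_apply]
  obtain ⟨b, hb⟩ := (IsSimpleRing.isField_center R).mul_inv_cancel hq0
  exact hqn (hR.degLt_one_of_mul_eq_one (congrArg Subtype.val hb) n hn)

theorem commute_i_of_rightSemiInvariant (hR : IsDiffPolyRing δ i t coeff) {d : ℕ} {g : R}
    (hg : MonicDeg coeff d g) (hsi : RightSemiInvariant i g) (a : D) : Commute g (i a) := by
  obtain ⟨b, hb⟩ := hsi a
  have hba : b = a := by
    have h := hR.coeff_mul_add_of_degLt (l := 0) hg.2 (hR.degLt_i a)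
    rwa [add_zero, hb, hR.coeff_i_mul, hg.1, one_mul, mul_one, hR.coeff_i, single_eq_same] at h
  rw [Commute, SemiconjBy, hb, hba]

theorem commute_commutator (hR : IsDiffPolyRing δ i t coeff) {g : R}
    (hg : ∀ a, Commute g (i a)) (a : D) : Commute (t * g - g * t) (i a) := by
  have ht := hR.1 a
  calc (t * g - g * t) * i a = t * (g * i a) - g * (t * i a) := by noncomm_ring
    _ = (t * i a) * g - g * (t * i a) := by rw [(hg a).eq, mul_assoc]
    _ = i a * (t * g) + i (δ a) * g - (g * i a) * t - g * i (δ a) := by rw [ht]; noncomm_ring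
    _ = i a * (t * g - g * t) := by rw [(hg a).eq, (hg (δ a)).eq]; noncomm_ring

theorem coeff_tpow_succ_mul_i (hR : IsDiffPolyRing δ i t coeff) (j : ℕ) (a : D) :
    coeff (t ^ (j + 1) * i a) j = (j + 1) • δ a := by
  induction j with
  | zero => rw [zero_add, pow_one, hR.coeff_t_mul, if_pos rfl, hR.coeff_i, single_eq_same,
      zero_add, one_smul]
  | succ j ih =>
    have htop := hR.coeff_tpow_mul (hR.degLt_i a) (j + 1)
    rw [add_zero, hR.coeff_i, single_eq_same] at htop
    rw [pow_succ', mul_assoc, hR.coeff_t_mul, if_neg (by omega), Nat.add_sub_cancel, ih, htop]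
    exact (succ_nsmul _ (j + 1)).symm

theorem coeff_mul_i_of_degLt (hR : IsDiffPolyRing δ i t coeff) {e : ℕ} {g : R}
    (hg : DegLt coeff (e + 2) g) (a : D) :
    coeff (g * i a) e = coeff g e * a + coeff g (e + 1) * ((e + 1) • δ a) := by
  have htop := hR.coeff_tpow_mul (hR.degLt_i a) e
  rw [add_zero, hR.coeff_i, single_eq_same] at htop
  rw [hR.coeff_mul_eq_sum, Finset.sum_eq_add e (e + 1) (by omega), htop,
    hR.coeff_tpow_succ_mul_i]
  · intro j _ hj
    rcases lt_or_gt_of_ne hj.1 with hje | hje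
    · rw [hR.degLt_tpow_mul (hR.degLt_i a) j e (by omega), mul_zero]
    · rw [hg j (by omega), zero_mul]
  all_goals intro h; rw [Finsupp.notMem_support_iff.mp h, zero_mul]

end Ring

section DivisionRing

variable {D R : Type*} [DivisionRing D] [Ring R] {δ : D → D} {i : D →+* R} {t : R}
  {coeff : R ≃+ (ℕ →₀ D)}

/-- Otherwise `[t, g]`, scaled to be monic, would be a right semi-invariant of smaller positive
degree. -/
theorem commutator_eq_i_of_minimal (hR : IsDiffPolyRing δ i t coeff) {d : ℕ} {g : R}
    (hg : MonicDeg coeff d g) (hsi : RightSemiInvariant i g)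
    (hmin : ∀ l < d, 0 < l → ∀ g' : R, MonicDeg coeff l g' → ¬RightSemiInvariant i g') :
    t * g - g * t = i (coeff (t * g - g * t) 0) := by
  have hcd : DegLt coeff d (t * g - g * t) := fun n hn => by
    rw [hR.coeff_commutator]
    rcases hn.eq_or_lt with rfl | hlt
    · rw [hg.1, hR.deriv_one]
    · rw [hg.2 n hlt, hR.deriv_zero]
  refine hR.eq_i_of_degLt_one fun n hn => ?_
  by_contra hne
  obtain ⟨l, hnl, hl, hcl⟩ := exists_ge_coeff_ne_zero_degLt_succ hne
  have hld : l < d := by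
    by_contra h
    exact hl (hcd l (by omega))
  have hci := hR.commute_commutator (hR.commute_i_of_rightSemiInvariant hg hsi)
  refine hmin l hld (by omega) _ ⟨?_, fun n hn => ?_⟩ (rightSemiInvariant_i_inv_mul hci hl)
  · rw [hR.coeff_i_mul, inv_mul_cancel₀ hl]
  · rw [hR.coeff_i_mul, hcl n hn, mul_zero]

/-- Comparing the coefficients of `t^e` in `g * a = a * g` gives `(e + 1) δ(a) = [a, g_e]`. -/
theorem exists_deriv_eq_commutator (hR : IsDiffPolyRing δ i t coeff) {e : ℕ} {g : R}
    (hg : MonicDeg coeff (e + 1) g) (hgi : ∀ a, Commute g (i a))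
    (he : ((e + 1 : ℕ) : D) ≠ 0) :
    ∃ u : D, ∀ a, δ a = a * u - u * a := by
  set n : D := ((e + 1 : ℕ) : D)
  refine ⟨n⁻¹ * coeff g e, fun a => ?_⟩
  have h := hR.coeff_mul_i_of_degLt hg.2 a
  rw [(hgi a).eq, hR.coeff_i_mul, hg.1, one_mul, nsmul_eq_mul] at h
  have hcomm : Commute n⁻¹ a := (Nat.cast_commute (e + 1) a).inv_left₀
  calc δ a = n⁻¹ * (n * δ a) := (inv_mul_cancel_left₀ he _).symm
    _ = n⁻¹ * (a * coeff g e - coeff g e * a) := by rw [h, add_sub_cancel_left]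
    _ = a * (n⁻¹ * coeff g e) - n⁻¹ * coeff g e * a := by
      rw [mul_sub, ← mul_assoc, hcomm.eq, mul_assoc, mul_assoc]

theorem t_add_i_mem_center (hR : IsDiffPolyRing δ i t coeff) {u : D}
    (hu : ∀ a, δ a = a * u - u * a) : t + i u ∈ Subring.center R := by
  refine hR.mem_center_of_commute (fun a => ?_) ?_
  · show (t + i u) * i a = i a * (t + i u)
    rw [add_mul, hR.1 a, hu a, mul_add, ← map_mul, ← map_mul, add_assoc, ← map_add,
      sub_add_cancel]
  · have hut : Commute (i u) t := by
      show i u * t = t * i u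
      rw [hR.1 u, hu u, sub_self, map_zero, add_zero]
    exact (Commute.refl t).add_left hut

theorem not_isSimpleRing_of_rightSemiInvariant (hR : IsDiffPolyRing δ i t coeff) {m : ℕ}
    {f : R} (hm : 0 < m) (hf : MonicDeg coeff m f) (hsi : RightSemiInvariant i f) :
    ¬IsSimpleRing R := by
  classical
  have hex : ∃ d, 0 < d ∧ ∃ g, MonicDeg coeff d g ∧ RightSemiInvariant i g :=
    ⟨m, hm, f, hf, hsi⟩
  obtain ⟨hd, g, hg, hgsi⟩ := Nat.find_spec hex
  have hmin : ∀ l < Nat.find hex, 0 < l → ∀ g' : R, MonicDeg coeff l g' →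
      ¬RightSemiInvariant i g' := fun l hl h0 g' hg' hsi' =>
    Nat.find_min hex hl ⟨h0, g', hg', hsi'⟩
  set d := Nat.find hex
  have hgi := hR.commute_i_of_rightSemiInvariant hg hgsi
  by_cases hdD : (d : D) = 0
  · have hcomm : Commute (g ^ d) t :=
      commute_pow_of_natCast_eq_zero (hgi _) (hR.commutator_eq_i_of_minimal hg hgsi hmin)
        (by rw [← map_natCast i, hdD, map_zero])
    refine hR.not_isSimpleRing_of_mem_center
      (hR.mem_center_of_commute (fun a => (hgi a).pow_left d) hcomm) (n := d * d)
      (Nat.mul_pos hd hd) ?_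
    rw [(hR.monicDeg_pow hg d).1]
    exact one_ne_zero
  · obtain ⟨e, he⟩ : ∃ e, d = e + 1 := ⟨d - 1, by omega⟩
    rw [he] at hg hdD
    obtain ⟨u, hu⟩ := hR.exists_deriv_eq_commutator hg hgi hdD
    refine hR.not_isSimpleRing_of_mem_center (hR.t_add_i_mem_center hu) one_pos ?_
    rw [map_add, Finsupp.add_apply, hR.coeff_i, single_eq_of_ne (by omega), add_zero,
      ← pow_one t, hR.coeff_tpow, single_eq_same]
    exact one_ne_zero

end DivisionRing

end IsDiffPolyRing

theorem stmt_2_general {D R : Type*} [DivisionRing D] [Ring R]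
    (δ : D → D)
    (i : D →+* R) (t : R) (coeff : R ≃+ (ℕ →₀ D))
    (hR : IsDiffPolyRing δ i t coeff)
    (hsimple : IsSimpleRing R) :
    ¬∃ (f : R) (m : ℕ) (mulS : R → R → R),
      2 ≤ m ∧ MonicDeg coeff m f ∧ IsPetitMul coeff f m mulS ∧
      ¬IsAssocOn (SfSet coeff m) mulS ∧
      ∀ a : D, i a ∈ RightNuc (SfSet coeff m) mulS := by
  rintro ⟨f, m, mulS, hm, hf, hmul, -, hnuc⟩
  exact hR.not_isSimpleRing_of_rightSemiInvariant (by omega) hf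
    (hR.rightSemiInvariant_of_forall_mem_rightNuc hm hf hmul hnuc) hsimple

/-- if `R = D[t;δ]` is simple, there is no monic `f` of degree
`m ≥ 2` such that `S_f` is not associative and `D ⊆ Nuc_r(S_f)`. -/
theorem stmt_2 {D R : Type*} [DivisionRing D] [Ring R]
    (δ : D → D) (hδ : IsDeriv δ) (hδ0 : δ ≠ 0)
    (i : D →+* R) (t : R) (coeff : R ≃+ (ℕ →₀ D))
    (hR : IsDiffPolyRing δ i t coeff)
    (hsimple : IsSimpleRing R) :
    ¬∃ (f : R) (m : ℕ) (mulS : R → R → R),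
      2 ≤ m ∧ MonicDeg coeff m f ∧ IsPetitMul coeff f m mulS ∧
      ¬IsAssocOn (SfSet coeff m) mulS ∧
      ∀ a : D, i a ∈ RightNuc (SfSet coeff m) mulS :=
  stmt_2_general δ i t coeff hR hsimple
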